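/- arXiv:2309.15468 — 4 statements merged into one kernel-verified Lean document; each statement's English description precedes it below -/
import Mathlib

section
/- The global transformation τ_e induced by an injective pattern e is injective. -/
/-!
Suppose `τ c = τ c'` with `c ≠ c'`. At a position where `c` and `c'` differ, exactly one of them
matches `e`, say `c` at `n`. Since `c'` does not match at `n`, they differ at some `n + j` with
`0 < |j| ≤ R`, and there `c'` must match, because an injective pattern cannot match one
configuration twice within distance `R`. So `c` matches at `n` and `c'` at `m ≠ n` nearby. The
injectivity of `e` for the shift `|m - n|` yields a position where `c` and `c'` read two different
letters of `e`; one of them matches there, again within distance `R` of its other match.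
-/

/-- `c` matches the pattern `e` (with radii `L`, `R`, wildcard at position 0) at `n`. -/
def Matches (L R : ℕ) (e : ℤ → ZMod 2) (c : ℤ → ZMod 2) (n : ℤ) : Prop :=
  ∀ j : ℤ, -(L : ℤ) ≤ j → j ≤ (R : ℤ) → j ≠ 0 → c (n + j) = e j

/-- `e` is an injective pattern for radii `L`, `R`: every prefix sub-string containing
the wildcard differs from the suffix sub-string of the same length. -/
def IsInjectivePattern (L R : ℕ) (e : ℤ → ZMod 2) : Prop :=
  ∀ s : ℤ, 1 ≤ s → s ≤ (R : ℤ) →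
    ∃ j : ℤ, -(L : ℤ) ≤ j ∧ j ≤ (R : ℤ) - s ∧ j ≠ 0 ∧ j + s ≠ 0 ∧ e j ≠ e (j + s)

open Classical in
/-- The global transformation induced by the pattern `e`. -/
noncomputable def tau (L R : ℕ) (e : ℤ → ZMod 2) (c : ℤ → ZMod 2) : ℤ → ZMod 2 :=
  fun n => if Matches L R e c n then 1 + c n else c n

variable {L R : ℕ} {e c c' : ℤ → ZMod 2}

theorem matches_iff_not_matches_of_tau_eq (h : tau L R e c = tau L R e c') {p : ℤ}
    (hp : c p ≠ c' p) : Matches L R e c p ↔ ¬ Matches L R e c' p := by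
  have hpt := congrFun h p
  by_cases hc : Matches L R e c p <;> by_cases hc' : Matches L R e c' p <;>
    simp only [tau, hc, hc', if_true, if_false, add_right_inj] at hpt <;> tauto

namespace IsInjectivePattern

variable (he : IsInjectivePattern L R e)
include he

theorem eq_of_matches {n m : ℤ} (hn : Matches L R e c n) (hm : Matches L R e c m)
    (hR : |m - n| ≤ R) : n = m := by
  wlog hlt : n < m generalizing n m
  · rcases (not_lt.mp hlt).eq_or_lt with heq | hgt
    · exact heq.symm
    · exact (this hm hn (abs_sub_comm m n ▸ hR) hgt).symm
  obtain ⟨j, hjL, hjR, hj0, hjs0, hne⟩ := he (m - n) (by omega) (le_of_abs_le hR)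
  refine absurd ?_ hne
  calc e j = c (m + j) := (hm j hjL (by omega) hj0).symm
    _ = c (n + (j + (m - n))) := by ring_nf
    _ = e (j + (m - n)) := hn _ (by omega) (by omega) hjs0

theorem matches_of_tau_eq (h : tau L R e c = tau L R e c') {n p : ℤ}
    (hn : Matches L R e c n) (hp : c p ≠ c' p) (hpn : p ≠ n) (hR : |p - n| ≤ R) :
    Matches L R e c' p :=
  not_not.mp fun hp' =>
    hpn (he.eq_of_matches hn ((matches_iff_not_matches_of_tau_eq h hp).mpr hp') hR).symm

theorem eq_of_tau_eq_of_matches (hLR : L ≤ R) (h : tau L R e c = tau L R e c') {n m : ℤ}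
    (hn : Matches L R e c n) (hm : Matches L R e c' m) (hR : |m - n| ≤ R) : n = m := by
  wlog hlt : n < m generalizing c c' n m
  · rcases (not_lt.mp hlt).eq_or_lt with heq | hgt
    · exact heq.symm
    · exact (this h.symm hm hn (abs_sub_comm m n ▸ hR) hgt).symm
  obtain ⟨j, hjL, hjR, hj0, hjs0, hne⟩ := he (m - n) (by omega) (le_of_abs_le hR)
  have hc : c (m + j) = e (j + (m - n)) := by
    rw [← hn _ (by omega) (by omega) hjs0]; ring_nf
  have hc' : c' (m + j) = e j := hm j hjL (by omega) hj0
  have hmj := he.matches_of_tau_eq h hn (by rw [hc, hc']; exact hne.symm) (by omega)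
    (abs_le.mpr ⟨by omega, by omega⟩)
  exact absurd (he.eq_of_matches hm hmj (abs_le.mpr ⟨by omega, by omega⟩)) (by omega)

end IsInjectivePattern

theorem tau_injective_general (L R : ℕ) (hLR : L ≤ R)
    (e : ℤ → ZMod 2) (he : IsInjectivePattern L R e) :
    Function.Injective (tau L R e) := by
  intro c c' h
  funext n
  by_contra hn
  wlog hc : Matches L R e c n generalizing c c'
  · exact this h.symm (Ne.symm hn)
      (not_not.mp ((matches_iff_not_matches_of_tau_eq h hn).not.mp hc))
  have hc' := (matches_iff_not_matches_of_tau_eq h hn).mp hc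
  obtain ⟨j, hjL, hjR, hj0, hne'⟩ : ∃ j, -(L : ℤ) ≤ j ∧ j ≤ R ∧ j ≠ 0 ∧ c' (n + j) ≠ e j := by
    simpa [Matches] using hc'
  have hj : |n + j - n| ≤ R := abs_le.mpr ⟨by omega, by omega⟩
  have hm := he.matches_of_tau_eq h hc ((hc j hjL hjR hj0).trans_ne hne'.symm) (by omega) hj
  exact hj0 (by linarith [he.eq_of_tau_eq_of_matches hLR h hc hm hj])

/-- the global transformation induced by an injective pattern is injective. -/
theorem tau_injective (L R : ℕ) (hL : 1 ≤ L) (hLR : L ≤ R)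
    (e : ℤ → ZMod 2) (he : IsInjectivePattern L R e) :
    Function.Injective (tau L R e) :=
  tau_injective_general L R hLR e he
end

section
/- The global transformation τ_e induced by an injective pattern e is an involution: τ_e(τ_e(c)) = c for every configuration c; equivalently τ_e ∘ τ_e is the identity on configurations. -/
section

variable {L R : ℕ} {e : ℤ → ZMod 2}

theorem tau_apply_of_matches {c : ℤ → ZMod 2} {n : ℤ} (h : Matches L R e c n) :
    tau L R e c n = 1 + c n := if_pos h

theorem tau_apply_of_not_matches {c : ℤ → ZMod 2} {n : ℤ} (h : ¬ Matches L R e c n) :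
    tau L R e c n = c n := if_neg h

theorem IsInjectivePattern.not_matches_add (he : IsInjectivePattern L R e)
    {c : ℤ → ZMod 2} {n s : ℤ} (hs1 : 1 ≤ s) (hs2 : s ≤ R) (h : Matches L R e c n) :
    ¬ Matches L R e c (n + s) := by
  intro hs
  obtain ⟨j, hjL, hjR, hj0, hjs0, hne⟩ := he s hs1 hs2
  have hcj : c (n + s + j) = e j := hs j hjL (by omega) hj0
  have hcjs : c (n + (j + s)) = e (j + s) := h (j + s) (by omega) (by omega) hjs0
  exact hne (by rw [← hcj, ← hcjs, add_comm j s, add_assoc])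

theorem IsInjectivePattern.not_matches_of_mem_window (he : IsInjectivePattern L R e)
    (hLR : L ≤ R) {c : ℤ → ZMod 2} {n j : ℤ} (hjL : -(L : ℤ) ≤ j) (hjR : j ≤ R) (hj0 : j ≠ 0)
    (h : Matches L R e c n) : ¬ Matches L R e c (n + j) := by
  intro hj
  rcases lt_or_gt_of_ne hj0 with hneg | hpos
  · exact he.not_matches_add (s := -j) (by omega) (by omega) hj (by simpa using h)
  · exact he.not_matches_add hpos hjR h hj

theorem IsInjectivePattern.matches_tau_of_matches (he : IsInjectivePattern L R e)
    (hLR : L ≤ R) {c : ℤ → ZMod 2} {n : ℤ} (h : Matches L R e c n) :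
    Matches L R e (tau L R e c) n := fun j hjL hjR hj0 => by
  rw [tau_apply_of_not_matches (he.not_matches_of_mem_window hLR hjL hjR hj0 h)]
  exact h j hjL hjR hj0

theorem IsInjectivePattern.matches_of_matches_tau (he : IsInjectivePattern L R e)
    (hLR : L ≤ R) {c : ℤ → ZMod 2} {n : ℤ} (h : Matches L R e (tau L R e c) n) :
    Matches L R e c n := by
  intro j hjL hjR hj0
  by_contra hne
  -- `τ_e` changed the cell `n + j`, so `c` matches at `n + j`, and then so does `τ_e c`.
  have hcj : Matches L R e c (n + j) := by
    by_contra hcj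
    exact hne (tau_apply_of_not_matches hcj ▸ h j hjL hjR hj0)
  exact he.not_matches_of_mem_window hLR hjL hjR hj0 h (he.matches_tau_of_matches hLR hcj)

theorem IsInjectivePattern.matches_tau_iff (he : IsInjectivePattern L R e) (hLR : L ≤ R)
    {c : ℤ → ZMod 2} {n : ℤ} : Matches L R e (tau L R e c) n ↔ Matches L R e c n :=
  ⟨he.matches_of_matches_tau hLR, he.matches_tau_of_matches hLR⟩

theorem IsInjectivePattern.tau_involutive (he : IsInjectivePattern L R e) (hLR : L ≤ R) :
    Function.Involutive (tau L R e) := by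
  intro c
  funext n
  by_cases h : Matches L R e c n
  · rw [tau_apply_of_matches (he.matches_tau_iff hLR |>.mpr h), tau_apply_of_matches h,
      ← add_assoc, CharTwo.add_self_eq_zero, zero_add]
  · rw [tau_apply_of_not_matches (mt (he.matches_tau_iff hLR).mp h),
      tau_apply_of_not_matches h]

end

theorem tau_involution_general (L R : ℕ) (hLR : L ≤ R)
    (e : ℤ → ZMod 2) (he : IsInjectivePattern L R e) :
    (∀ c : ℤ → ZMod 2, tau L R e (tau L R e c) = c) ∧
    tau L R e ∘ tau L R e = id :=
  ⟨he.tau_involutive hLR, (he.tau_involutive hLR).comp_self⟩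

/-- the global transformation induced by an injective pattern is an involution. -/
theorem tau_involution (L R : ℕ) (hL : 1 ≤ L) (hLR : L ≤ R)
    (e : ℤ → ZMod 2) (he : IsInjectivePattern L R e) :
    (∀ c : ℤ → ZMod 2, tau L R e (tau L R e c) = c) ∧
    tau L R e ∘ tau L R e = id :=
  tau_involution_general L R hLR e he
end

section
/- For a pattern family P satisfying pattern independence, the set of matches is preserved by the mixture-induced transformation: for every configuration c, every p ∈ P and every n ∈ ℤ, the image τ_P(c) matches p at n if and only if c matches p at n. -/
/-- `c` matches the pattern `p` of the family (radii `Lp p`, `Rp p`, entries `ep p`,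
wildcard at position 0) at position `n`. -/
def MatchesP {ι : Type*} (Lp Rp : ι → ℕ) (ep : ι → ℤ → ZMod 2)
    (p : ι) (c : ℤ → ZMod 2) (n : ℤ) : Prop :=
  ∀ j : ℤ, -(Lp p : ℤ) ≤ j → j ≤ (Rp p : ℤ) → j ≠ 0 → c (n + j) = ep p j

/-- The pattern family satisfies pattern independence: whenever the center of one
window lies in the other's window (and we are not comparing a pattern with itself at
shift 0), the two patterns disagree at some common non-wildcard position. -/
def PatternIndependence {ι : Type*} (Lp Rp : ι → ℕ) (ep : ι → ℤ → ZMod 2) : Prop :=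
  ∀ p q : ι, ∀ s : ℤ, ¬ (p = q ∧ s = 0) →
    ((-(Lp p : ℤ) ≤ s ∧ s ≤ (Rp p : ℤ)) ∨ (-(Lp q : ℤ) ≤ -s ∧ -s ≤ (Rp q : ℤ))) →
    ∃ j : ℤ, -(Lp p : ℤ) ≤ j ∧ j ≤ (Rp p : ℤ) ∧
      s - (Lp q : ℤ) ≤ j ∧ j ≤ s + (Rp q : ℤ) ∧
      j ≠ 0 ∧ j ≠ s ∧ ep p j ≠ ep q (j - s)

open Classical in
/-- The patterns mixture-induced global transformation `τ_P`. -/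
noncomputable def tauP {ι : Type*} (Lp Rp : ι → ℕ) (ep : ι → ℤ → ZMod 2)
    (c : ℤ → ZMod 2) : ℤ → ZMod 2 :=
  fun n => if ∃ p : ι, MatchesP Lp Rp ep p c n then 1 + c n else c n

/-!
Pattern independence makes matches sparse: two matches of `c` whose centres lie in each
other's windows coincide. Hence `τ_P` flips only centres of matches and never touches a
non-wildcard cell of a match, which gives one direction. Conversely, if `τ_P(c)` matched `p`
at `n` while `c` did not, some cell `n + j` of that window was flipped, so `c` matches some `q`
at `n + j`; independence of `p` and `q` at shift `j` yields a cell `n + k` of both windows where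
`e_p(k) ≠ e_q(k - j)`, and since `τ_P` leaves the non-wildcard cells of the match of `q`
unchanged, `e_p(k) = τ_P(c)(n + k) = c(n + k) = e_q(k - j)`.
-/

section

variable {ι : Type*} {Lp Rp : ι → ℕ} {ep : ι → ℤ → ZMod 2} {c : ℤ → ZMod 2}

theorem PatternIndependence.eq_of_matchesP (hind : PatternIndependence Lp Rp ep) {q q' : ι}
    {m m' : ℤ} (hq : MatchesP Lp Rp ep q c m) (hq' : MatchesP Lp Rp ep q' c m')
    (hL : -(Lp q : ℤ) ≤ m' - m) (hR : m' - m ≤ (Rp q : ℤ)) : q = q' ∧ m = m' := by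
  by_contra hne
  obtain ⟨k, hk₁, hk₂, hk₃, hk₄, hk₀, hks, hdiff⟩ :=
    hind q q' (m' - m) (fun ⟨hqq, hs⟩ => hne ⟨hqq, by omega⟩) (Or.inl ⟨hL, hR⟩)
  have hc' := hq' (k - (m' - m)) (by omega) (by omega) (by omega)
  rw [show m' + (k - (m' - m)) = m + k by ring] at hc'
  exact hdiff ((hq k hk₁ hk₂ hk₀).symm.trans hc')

theorem exists_matchesP_of_tauP_ne {n : ℤ} (h : tauP Lp Rp ep c n ≠ c n) :
    ∃ q, MatchesP Lp Rp ep q c n := by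
  by_contra hno
  exact h (if_neg hno)

theorem tauP_apply_of_matchesP (hind : PatternIndependence Lp Rp ep) {q : ι} {m j : ℤ}
    (hq : MatchesP Lp Rp ep q c m) (hj₁ : -(Lp q : ℤ) ≤ j) (hj₂ : j ≤ (Rp q : ℤ))
    (hj₀ : j ≠ 0) : tauP Lp Rp ep c (m + j) = c (m + j) := by
  by_contra hne
  obtain ⟨q', hq'⟩ := exists_matchesP_of_tauP_ne hne
  have := (hind.eq_of_matchesP hq hq' (by omega) (by omega)).2
  omega

theorem matchesP_tauP_of_matchesP (hind : PatternIndependence Lp Rp ep) {p : ι} {n : ℤ}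
    (h : MatchesP Lp Rp ep p c n) : MatchesP Lp Rp ep p (tauP Lp Rp ep c) n :=
  fun j hj₁ hj₂ hj₀ => (tauP_apply_of_matchesP hind h hj₁ hj₂ hj₀).trans (h j hj₁ hj₂ hj₀)

theorem matchesP_of_matchesP_tauP (hind : PatternIndependence Lp Rp ep) {p : ι} {n : ℤ}
    (h : MatchesP Lp Rp ep p (tauP Lp Rp ep c) n) : MatchesP Lp Rp ep p c n := by
  intro j hj₁ hj₂ hj₀
  by_contra hne
  obtain ⟨q, hq⟩ : ∃ q, MatchesP Lp Rp ep q c (n + j) :=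
    exists_matchesP_of_tauP_ne fun he => hne (he ▸ h j hj₁ hj₂ hj₀)
  obtain ⟨k, hk₁, hk₂, hk₃, hk₄, hk₀, hkj, hdiff⟩ :=
    hind p q j (fun hpq => hj₀ hpq.2) (Or.inl ⟨hj₁, hj₂⟩)
  have hshift : n + j + (k - j) = n + k := by ring
  have hfixed := tauP_apply_of_matchesP hind hq (j := k - j) (by omega) (by omega) (by omega)
  have hq_at := hq (k - j) (by omega) (by omega) (by omega)
  rw [hshift] at hfixed hq_at
  exact hdiff (calc
    ep p k = tauP Lp Rp ep c (n + k) := (h k hk₁ hk₂ hk₀).symm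
    _ = c (n + k) := hfixed
    _ = ep q (k - j) := hq_at)

end

theorem tauP_preserves_matches_general (ι : Type*)
    (Lp Rp : ι → ℕ) (ep : ι → ℤ → ZMod 2)
    (hind : PatternIndependence Lp Rp ep)
    (c : ℤ → ZMod 2) (p : ι) (n : ℤ) :
    MatchesP Lp Rp ep p (tauP Lp Rp ep c) n ↔ MatchesP Lp Rp ep p c n :=
  ⟨matchesP_of_matchesP_tauP hind, matchesP_tauP_of_matchesP hind⟩

/-- under pattern independence, the set of matches is preserved by the
mixture-induced transformation. -/
theorem tauP_preserves_matches (ι : Type*) [Fintype ι]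
    (Lp Rp : ι → ℕ) (ep : ι → ℤ → ZMod 2)
    (hrad : ∀ p : ι, 1 ≤ Lp p ∧ Lp p ≤ Rp p)
    (hind : PatternIndependence Lp Rp ep)
    (c : ℤ → ZMod 2) (p : ι) (n : ℤ) :
    MatchesP Lp Rp ep p (tauP Lp Rp ep c) n ↔ MatchesP Lp Rp ep p c n :=
  tauP_preserves_matches_general ι Lp Rp ep hind c p n
end

section
/- With left radius L = 1 and right radius R = 2 (neighbor size 4), the injective patterns are exactly the two map strings 0X10 and 1X01: a function e : ℤ → ZMod 2 satisfies the injective pattern condition for L = 1, R = 2 if and only if (e(-1), e(1), e(2)) is (0,1,0) or (1,0,1). -/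
/-! For `L = 1`, `R = 2` each shift leaves exactly one admissible comparison avoiding the
wildcard: shift 1 compares positions 1 and 2, shift 2 compares positions -1 and 1. Over
`ZMod 2` two successive inequalities force the string to alternate. -/

theorem isInjectivePattern_one_two_iff (e : ℤ → ZMod 2) :
    IsInjectivePattern 1 2 e ↔ e 1 ≠ e 2 ∧ e (-1) ≠ e 1 := by
  constructor
  · intro h
    obtain ⟨j, _, _, _, _, hshift1⟩ := h 1 le_rfl (by norm_num)
    obtain ⟨k, _, _, _, _, hshift2⟩ := h 2 (by norm_num) le_rfl
    obtain rfl : j = 1 := by omega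
    obtain rfl : k = -1 := by omega
    exact ⟨hshift1, by simpa using hshift2⟩
  · rintro ⟨h12, hm11⟩ s hs1 hs2
    obtain rfl | rfl : s = 1 ∨ s = 2 := by omega
    · exact ⟨1, by norm_num, by norm_num, by norm_num, by norm_num, h12⟩
    · exact ⟨-1, by norm_num, by norm_num, by norm_num, by norm_num, by simpa using hm11⟩

theorem ZMod.two_ne_ne_iff (a b c : ZMod 2) :
    a ≠ b ∧ b ≠ c ↔ (a, b, c) = (0, 1, 0) ∨ (a, b, c) = (1, 0, 1) := by
  revert a b c
  decide

/-- with left radius 1 and right radius 2 (neighbor size 4), the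
injective patterns are exactly the two map strings `0X10` and `1X01`. -/
theorem injective_patterns_L1_R2 (e : ℤ → ZMod 2) :
    IsInjectivePattern 1 2 e ↔
      ((e (-1), e 1, e 2) = ((0 : ZMod 2), (1 : ZMod 2), (0 : ZMod 2)) ∨
       (e (-1), e 1, e 2) = ((1 : ZMod 2), (0 : ZMod 2), (1 : ZMod 2))) := by
  rw [isInjectivePattern_one_two_iff, ← ZMod.two_ne_ne_iff, and_comm]
end
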